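/- arXiv:2408.08053 — 2 statements merged into one kernel-verified Lean document; each statement's English description precedes it below -/
import Mathlib

section
/- Let ā(m) denote the number of cyclic signatures of length m. Then ā(1) = 3, ā(2) = 7, ā(3) = 15, and ā(m) = 3·ā(m−1) − ā(m−2) − ā(m−3) for all m ≥ 4. -/
open scoped Classical

/-- The three-letter alphabet {uncovered, covered, occupied}. -/
inductive VState : Type
  | unc | cov | occ
  deriving DecidableEq

instance instFintypeVState : Fintype VState :=
  ⟨{VState.unc, VState.cov, VState.occ}, fun x => by cases x <;> simp⟩

/-- A signature of length `m`: a string over {unc, cov, occ} with no adjacent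
(unc, occ) or (occ, unc) pair. -/
def IsSignature {m : ℕ} (σ : Fin m → VState) : Prop :=
  ∀ i : Fin m, ∀ h : (i : ℕ) + 1 < m,
    ¬(σ i = VState.unc ∧ σ ⟨(i : ℕ) + 1, h⟩ = VState.occ) ∧
    ¬(σ i = VState.occ ∧ σ ⟨(i : ℕ) + 1, h⟩ = VState.unc)

/-- A cyclic signature: a signature where the adjacency constraint is also imposed
on the pair (first symbol, last symbol). -/
def IsCycSignature {m : ℕ} (σ : Fin m → VState) : Prop :=
  IsSignature σ ∧ ∀ h : 0 < m,
    ¬(σ ⟨0, h⟩ = VState.unc ∧ σ ⟨m - 1, Nat.sub_lt h Nat.one_pos⟩ = VState.occ) ∧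
    ¬(σ ⟨0, h⟩ = VState.occ ∧ σ ⟨m - 1, Nat.sub_lt h Nat.one_pos⟩ = VState.unc)

/-- `ā(m)`: the number of cyclic signatures of length `m`. -/
noncomputable def numCycSig (m : ℕ) : ℕ :=
  Fintype.card {σ : Fin m → VState // IsCycSignature σ}

/-!
Reading a cyclic signature of length `m ≥ 1` as a closed walk of length `m` in the graph on
`{unc, cov, occ}` whose edges (loops included) are the compatible pairs gives `ā(m) = tr Aᵐ`
for its `0/1` adjacency matrix `A`. The characteristic polynomial of `A` is
`X³ - 3X² + X + 1`, so by Cayley–Hamilton the traces of the powers of `A` satisfy the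
recurrence. Since `ā(0) = 1 ≠ tr A⁰`, it only holds from `m = 4` on.
-/

open Matrix Finset

section Walks

variable {α : Type*} (r : α → α → Prop)

def IsWalk {n : ℕ} (p : Fin (n + 1) → α) : Prop :=
  ∀ k : Fin n, r (p k.castSucc) (p k.succ)

def IsClosedWalk {n : ℕ} (p : Fin (n + 1) → α) : Prop :=
  IsWalk r p ∧ r (p (Fin.last n)) (p 0)

variable {r}

theorem isWalk_cons {n : ℕ} (a : α) (q : Fin (n + 1) → α) :
    IsWalk r (Fin.cons a q : Fin (n + 2) → α) ↔ r a (q 0) ∧ IsWalk r q := by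
  simp [IsWalk, Fin.forall_fin_succ]

variable (r) [Fintype α] [DecidableEq α] [DecidableRel r]

def relMatrix : Matrix α α ℕ :=
  Matrix.of fun i j => if r i j then 1 else 0

theorem card_walks_cons (n : ℕ) (i j : α) :
    #{p : Fin (n + 2) → α | p 0 = i ∧ p (Fin.last (n + 1)) = j ∧ IsWalk r p} =
      #{q : Fin (n + 1) → α | r i (q 0) ∧ q (Fin.last n) = j ∧ IsWalk r q} := by
  refine card_nbij' Fin.tail (fun q => Fin.cons i q) ?_ ?_ ?_ ?_
  · intro p hp
    obtain ⟨a, q, rfl⟩ : ∃ a q, p = Fin.cons a q :=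
      ⟨p 0, Fin.tail p, (Fin.cons_self_tail p).symm⟩
    simp only [coe_filter, Set.mem_ofPred_eq, mem_univ, true_and, isWalk_cons,
      Fin.cons_zero] at hp
    obtain ⟨rfl, hp⟩ := hp
    simp only [coe_filter, Fin.tail_cons, Set.mem_ofPred_eq, mem_univ, true_and]
    exact ⟨hp.2.1, hp.1, hp.2.2⟩
  · intro q hq
    simp_all [isWalk_cons]
  · intro p hp
    rw [← (mem_filter.1 (mem_coe.1 hp)).2.1]
    exact Fin.cons_self_tail p
  · intro q _
    simp

theorem relMatrix_pow_apply (n : ℕ) (i j : α) :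
    (relMatrix r ^ n) i j =
      #{p : Fin (n + 1) → α | p 0 = i ∧ p (Fin.last n) = j ∧ IsWalk r p} := by
  induction n generalizing i with
  | zero =>
    rw [pow_zero, one_apply]
    split_ifs with h
    · subst h
      symm
      rw [card_eq_one]
      exact ⟨fun _ => i, by ext p; simp [funext_iff, Fin.forall_fin_one, IsWalk]⟩
    · refine (card_eq_zero.2 (filter_eq_empty_iff.2 ?_)).symm
      rintro p - ⟨rfl, rfl, -⟩
      exact h rfl
  | succ n ih =>
    rw [pow_succ', mul_apply, card_walks_cons,
      card_eq_sum_card_fiberwise (f := fun q => q 0) (t := univ) (fun _ _ => mem_univ _)]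
    refine sum_congr rfl fun k _ => ?_
    rw [ih, filter_filter, relMatrix, of_apply]
    split_ifs with hik
    · rw [one_mul]
      refine congrArg card (filter_congr fun q _ => ?_)
      constructor
      · rintro ⟨rfl, hq⟩
        exact ⟨⟨hik, hq⟩, rfl⟩
      · rintro ⟨⟨-, hq⟩, rfl⟩
        exact ⟨rfl, hq⟩
    · rw [zero_mul, eq_comm, card_eq_zero, filter_eq_empty_iff]
      rintro q - ⟨⟨hiq, -⟩, rfl⟩
      exact hik hiq

theorem trace_relMatrix_pow_succ (n : ℕ) :
    trace (relMatrix r ^ (n + 1)) = #{p : Fin (n + 1) → α | IsClosedWalk r p} := by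
  rw [card_eq_sum_card_fiberwise (f := fun p => (p 0, p (Fin.last n))) (t := univ)
    (fun _ _ => mem_univ _), Fintype.sum_prod_type, trace, pow_succ]
  refine sum_congr rfl fun i _ => ?_
  rw [diag_apply, mul_apply]
  refine sum_congr rfl fun j _ => ?_
  rw [relMatrix_pow_apply, filter_filter, relMatrix, of_apply]
  split_ifs with hji
  · rw [mul_one]
    refine congrArg card (filter_congr fun p _ => ?_)
    simp only [IsClosedWalk, Prod.mk.injEq]
    constructor
    · rintro ⟨rfl, rfl, hp⟩
      exact ⟨⟨hp, hji⟩, rfl, rfl⟩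
    · rintro ⟨⟨hp, -⟩, rfl, rfl⟩
      exact ⟨rfl, rfl, hp⟩
  · rw [mul_zero, eq_comm, card_eq_zero, filter_eq_empty_iff]
    rintro p - ⟨⟨-, hp⟩, h⟩
    simp only [Prod.mk.injEq] at h
    exact hji (h.1 ▸ h.2 ▸ hp)

end Walks

theorem Matrix.trace_pow_recurrence {ι R : Type*} [Fintype ι] [DecidableEq ι] [CommSemiring R]
    {M : Matrix ι ι R} (hM : M ^ 3 + M + 1 = 3 • M ^ 2) (n : ℕ) :
    trace (M ^ (n + 3)) + trace (M ^ (n + 1)) + trace (M ^ n) = 3 * trace (M ^ (n + 2)) := by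
  have h : M ^ (n + 3) + M ^ (n + 1) + M ^ n = 3 • M ^ (n + 2) := by
    calc M ^ (n + 3) + M ^ (n + 1) + M ^ n = M ^ n * (M ^ 3 + M + 1) := by
          rw [mul_add, mul_add, mul_one, ← pow_succ, ← pow_add]
      _ = 3 • M ^ (n + 2) := by rw [hM, mul_smul_comm, ← pow_add]
  rw [← trace_add, ← trace_add, h, trace_smul, nsmul_eq_mul, Nat.cast_ofNat]

def Compatible (a b : VState) : Prop :=
  ¬(a = VState.unc ∧ b = VState.occ) ∧ ¬(a = VState.occ ∧ b = VState.unc)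

instance : DecidableRel Compatible := fun _ _ => by unfold Compatible; infer_instance

theorem compatible_comm {a b : VState} : Compatible a b ↔ Compatible b a := by
  unfold Compatible; tauto

theorem isSignature_iff_isWalk {n : ℕ} (σ : Fin (n + 1) → VState) :
    IsSignature σ ↔ IsWalk Compatible σ :=
  ⟨fun h k => h k.castSucc (by simp), fun h i hi => h ⟨i, by omega⟩⟩

theorem isCycSignature_iff_isClosedWalk {n : ℕ} (σ : Fin (n + 1) → VState) :
    IsCycSignature σ ↔ IsClosedWalk Compatible σ := by
  rw [IsCycSignature, IsClosedWalk, isSignature_iff_isWalk, compatible_comm]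
  exact and_congr_right fun _ => ⟨fun h => h n.succ_pos, fun h _ => h⟩

theorem numCycSig_succ (n : ℕ) : numCycSig (n + 1) = trace (relMatrix Compatible ^ (n + 1)) := by
  rw [trace_relMatrix_pow_succ, numCycSig, Fintype.card_subtype]
  exact congrArg card (filter_congr fun σ _ => isCycSignature_iff_isClosedWalk σ)

theorem relMatrix_compatible_pow_three :
    relMatrix Compatible ^ 3 + relMatrix Compatible + 1 = 3 • relMatrix Compatible ^ 2 := by
  decide

/-- `ā(1) = 3`, `ā(2) = 7`, `ā(3) = 15`, and
`ā(m) = 3·ā(m−1) − ā(m−2) − ā(m−3)` for all `m ≥ 4`. -/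
theorem numCycSig_recurrence :
    numCycSig 1 = 3 ∧ numCycSig 2 = 7 ∧ numCycSig 3 = 15 ∧
      ∀ m : ℕ, 4 ≤ m →
        (numCycSig m : ℤ) =
          3 * numCycSig (m - 1) - numCycSig (m - 2) - numCycSig (m - 3) := by
  refine ⟨by rw [numCycSig_succ]; decide, by rw [numCycSig_succ]; decide,
    by rw [numCycSig_succ]; decide, fun m hm => ?_⟩
  obtain ⟨n, rfl⟩ : ∃ n, m = n + 4 := ⟨m - 4, by omega⟩
  have h := trace_pow_recurrence relMatrix_compatible_pow_three (n + 1)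
  rw [show n + 4 - 1 = n + 2 + 1 by omega, show n + 4 - 2 = n + 1 + 1 by omega,
    show n + 4 - 3 = n + 1 by omega, numCycSig_succ, numCycSig_succ, numCycSig_succ,
    numCycSig_succ]
  simp only [add_assoc, Nat.reduceAdd] at h ⊢
  omega
end

section
/- The quantity sup_{m,n ≥ 1} G_{m×n}(1)^{1/(mn)} is finite (indeed at most 2, since 1 ≤ G_{m×n}(1) ≤ 2^{mn} for all m, n ≥ 1), and the limit μ = lim_{m,n→∞} G_{m×n}(1)^{1/(mn)} exists and equals this supremum; that is, G_{m×n}(1)^{1/(mn)} → sup_{m,n} G_{m×n}(1)^{1/(mn)} as min(m,n) → ∞. -/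
open scoped Classical

/-- `S` is a dominating set of `G`: every vertex is in `S` or adjacent to a vertex of `S`. -/
def IsDominating {V : Type*} (G : SimpleGraph V) (S : Finset V) : Prop :=
  ∀ v : V, v ∈ S ∨ ∃ u ∈ S, G.Adj u v

/-- The m×n grid graph `P_m □ P_n`. -/
def gridGraph (m n : ℕ) : SimpleGraph (Fin m × Fin n) :=
  (SimpleGraph.pathGraph m).boxProd (SimpleGraph.pathGraph n)

/-- `G_{m×n}(1)`: the total number of dominating sets of the m×n grid graph. -/
noncomputable def numDomGrid (m n : ℕ) : ℕ :=
  (Finset.univ.filter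
    (fun S : Finset (Fin m × Fin n) => IsDominating (gridGraph m n) S)).card

/-- `G_{m×n}(1)^{1/(mn)}`, as a real number. -/
noncomputable def gridGrowth (m n : ℕ) : ℝ :=
  (numDomGrid m n : ℝ) ^ ((1 : ℝ) / (m * n : ℕ))

/-!
Splitting an `(m₁ + m₂) × n` grid into an `m₁ × n` and an `m₂ × n` grid, the union of a
dominating set of each piece dominates the whole grid, so `log G_{m×n}(1)` is superadditive in
`m`, and by symmetry in `n`. Tiling an `m × n` grid by copies of an `m₀ × n₀` grid then gives the
two-dimensional Fekete lemma: `log G_{m×n}(1) / (mn)` tends to its supremum, and `exp` carries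
this over to `G_{m×n}(1)^{1/(mn)}`.
-/

open Finset Filter Topology SimpleGraph

section Dominating

variable {V W : Type*}

lemma IsDominating.image {G : SimpleGraph V} {H : SimpleGraph W} {S : Finset V}
    (hS : IsDominating G S) (φ : G →g H) (hφ : Function.Surjective φ) :
    IsDominating H (S.image φ) := by
  intro w
  obtain ⟨v, rfl⟩ := hφ w
  rcases hS v with hv | ⟨u, hu, huv⟩
  · exact .inl (mem_image_of_mem φ hv)
  · exact .inr ⟨φ u, mem_image_of_mem φ hu, φ.map_adj huv⟩

lemma isDominating_sum_iff {G : SimpleGraph V} {H : SimpleGraph W} {S : Finset (V ⊕ W)} :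
    IsDominating (G ⊕g H) S ↔ IsDominating G S.toLeft ∧ IsDominating H S.toRight := by
  constructor
  · intro hS
    refine ⟨fun v => ?_, fun w => ?_⟩
    · rcases hS (.inl v) with h | ⟨u | u, hu, huv⟩
      · exact .inl (mem_toLeft.2 h)
      · exact .inr ⟨u, mem_toLeft.2 hu, sum_adj_inl.1 huv⟩
      · exact absurd huv (by simp)
    · rcases hS (.inr w) with h | ⟨u | u, hu, huv⟩
      · exact .inl (mem_toRight.2 h)
      · exact absurd huv (by simp)
      · exact .inr ⟨u, mem_toRight.2 hu, sum_adj_inr.1 huv⟩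
  · rintro ⟨hG, hH⟩ (v | w)
    · rcases hG v with h | ⟨u, hu, huv⟩
      · exact .inl (mem_toLeft.1 h)
      · exact .inr ⟨.inl u, mem_toLeft.1 hu, sum_adj_inl.2 huv⟩
    · rcases hH w with h | ⟨u, hu, huv⟩
      · exact .inl (mem_toRight.1 h)
      · exact .inr ⟨.inr u, mem_toRight.1 hu, sum_adj_inr.2 huv⟩

variable [Fintype V] [Fintype W]

noncomputable def numDominating (G : SimpleGraph V) : ℕ :=
  #{S : Finset V | IsDominating G S}

lemma isDominating_univ (G : SimpleGraph V) : IsDominating G univ :=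
  fun v => .inl (mem_univ v)

lemma one_le_numDominating (G : SimpleGraph V) : 1 ≤ numDominating G :=
  card_pos.2 ⟨univ, mem_filter.2 ⟨mem_univ _, isDominating_univ G⟩⟩

lemma numDominating_le_two_pow (G : SimpleGraph V) : numDominating G ≤ 2 ^ Fintype.card V :=
  (card_filter_le _ _).trans_eq (by simp)

lemma numDominating_le_of_bijective {G : SimpleGraph V} {H : SimpleGraph W} (φ : G →g H)
    (hφ : Function.Bijective φ) : numDominating G ≤ numDominating H :=
  card_le_card_of_injOn (·.image φ)
    (fun _ hS => mem_filter.2 ⟨mem_univ _, (mem_filter.1 hS).2.image φ hφ.2⟩)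
    (image_injective hφ.1).injOn

lemma SimpleGraph.Iso.numDominating_eq {G : SimpleGraph V} {H : SimpleGraph W} (e : G ≃g H) :
    numDominating G = numDominating H :=
  (numDominating_le_of_bijective e.toHom e.bijective).antisymm
    (numDominating_le_of_bijective e.symm.toHom e.symm.bijective)

lemma numDominating_sum (G : SimpleGraph V) (H : SimpleGraph W) :
    numDominating (G ⊕g H) = numDominating G * numDominating H := by
  rw [numDominating, numDominating, numDominating, ← card_product]
  refine card_nbij' (fun S => (S.toLeft, S.toRight)) (fun p => p.1.disjSum p.2) ?_ ?_ ?_ ?_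
  all_goals
    intro _
    simp [isDominating_sum_iff, toLeft_disjSum_toRight]

end Dominating

section Superadditive

lemma natCast_mul_le_of_superadditive {u : ℕ → ℝ} (hu : ∀ a b, u a + u b ≤ u (a + b))
    (hu₀ : 0 ≤ u 0) (q m : ℕ) : q * u m ≤ u (q * m) := by
  induction q with
  | zero => simpa using hu₀
  | succ q ih =>
    calc ((q + 1 : ℕ) : ℝ) * u m = q * u m + u m := by push_cast; ring
      _ ≤ u (q * m) + u m := by gcongr
      _ ≤ u ((q + 1) * m) := by rw [Nat.succ_mul]; exact hu _ _

lemma monotone_of_superadditive {u : ℕ → ℝ} (hu : ∀ a b, u a + u b ≤ u (a + b))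
    (hu₀ : ∀ n, 0 ≤ u n) : Monotone u :=
  monotone_nat_of_le_succ fun n => (le_add_of_nonneg_right (hu₀ 1)).trans (hu n 1)

variable {f : ℕ → ℕ → ℝ}

/-- Tiling an `m × n` box by `⌊m/m₀⌋ ⌊n/n₀⌋` copies of an `m₀ × n₀` box. -/
lemma sub_mul_sub_mul_le_of_superadditive (hf₀ : ∀ m n, 0 ≤ f m n)
    (hf_left : ∀ m₁ m₂ n, f m₁ n + f m₂ n ≤ f (m₁ + m₂) n)
    (hf_right : ∀ m n₁ n₂, f m n₁ + f m n₂ ≤ f m (n₁ + n₂))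
    {m₀ n₀ m n : ℕ} (hm₀ : 0 < m₀) (hn₀ : 0 < n₀) (hn : n₀ ≤ n) :
    ((m : ℝ) - m₀) * (n - n₀) * f m₀ n₀ ≤ m₀ * n₀ * f m n := by
  set q := m / m₀
  set s := n / n₀
  have hq : (m : ℝ) - m₀ ≤ q * m₀ := by
    have := Nat.lt_div_mul_add (a := m) hm₀
    rw [sub_le_iff_le_add]; exact_mod_cast this.le
  have hs : (n : ℝ) - n₀ ≤ s * n₀ := by
    have := Nat.lt_div_mul_add (a := n) hn₀
    rw [sub_le_iff_le_add]; exact_mod_cast this.le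
  have hmono : f (q * m₀) (s * n₀) ≤ f m n :=
    (monotone_of_superadditive (hf_left · · _) (hf₀ · _) (Nat.div_mul_le_self m m₀)).trans
      (monotone_of_superadditive (hf_right _) (hf₀ _) (Nat.div_mul_le_self n n₀))
  calc ((m : ℝ) - m₀) * (n - n₀) * f m₀ n₀ ≤ (q * m₀) * (s * n₀) * f m₀ n₀ := by
        have h₀ := hf₀ m₀ n₀
        gcongr
        simpa using hn
    _ = m₀ * n₀ * (q * (s * f m₀ n₀)) := by ring
    _ ≤ m₀ * n₀ * f (q * m₀) (s * n₀) := by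
        gcongr
        calc (q : ℝ) * (s * f m₀ n₀) ≤ q * f m₀ (s * n₀) := by
              gcongr
              exact natCast_mul_le_of_superadditive (hf_right m₀) (hf₀ _ _) s n₀
          _ ≤ f (q * m₀) (s * n₀) :=
              natCast_mul_le_of_superadditive (hf_left · · _) (hf₀ _ _) q m₀
    _ ≤ m₀ * n₀ * f m n := by gcongr

lemma one_sub_div_mul_one_sub_div_mul_le_of_superadditive (hf₀ : ∀ m n, 0 ≤ f m n)
    (hf_left : ∀ m₁ m₂ n, f m₁ n + f m₂ n ≤ f (m₁ + m₂) n)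
    (hf_right : ∀ m n₁ n₂, f m n₁ + f m n₂ ≤ f m (n₁ + n₂))
    {m₀ n₀ m n : ℕ} (hm₀ : 0 < m₀) (hn₀ : 0 < n₀) (hm : 0 < m) (hn : n₀ ≤ n) :
    (1 - m₀ / m) * (1 - n₀ / n) * (f m₀ n₀ / (m₀ * n₀)) ≤ f m n / (m * n) := by
  have hmR : (0 : ℝ) < m := by exact_mod_cast hm
  have hnR : (0 : ℝ) < n := by exact_mod_cast hn₀.trans_le hn
  have hm₀R : (0 : ℝ) < m₀ := by exact_mod_cast hm₀
  have hn₀R : (0 : ℝ) < n₀ := by exact_mod_cast hn₀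
  calc (1 - m₀ / m) * (1 - n₀ / n) * (f m₀ n₀ / (m₀ * n₀))
      = ((m : ℝ) - m₀) * (n - n₀) * f m₀ n₀ / (m₀ * n₀) / (m * n) := by field_simp
    _ ≤ f m n / (m * n) := by
      gcongr
      rw [div_le_iff₀' (by positivity)]
      exact sub_mul_sub_mul_le_of_superadditive hf₀ hf_left hf_right hm₀ hn₀ hn

theorem tendsto_div_mul_sSup_of_superadditive (hf₀ : ∀ m n, 0 ≤ f m n)
    (hf_left : ∀ m₁ m₂ n, f m₁ n + f m₂ n ≤ f (m₁ + m₂) n)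
    (hf_right : ∀ m n₁ n₂, f m n₁ + f m n₂ ≤ f m (n₁ + n₂))
    (hbdd : BddAbove {x : ℝ | ∃ m n : ℕ, 1 ≤ m ∧ 1 ≤ n ∧ x = f m n / (m * n)}) :
    Tendsto (fun p : ℕ × ℕ => f p.1 p.2 / (p.1 * p.2)) (atTop ×ˢ atTop)
      (𝓝 (sSup {x : ℝ | ∃ m n : ℕ, 1 ≤ m ∧ 1 ≤ n ∧ x = f m n / (m * n)})) := by
  set S := {x : ℝ | ∃ m n : ℕ, 1 ≤ m ∧ 1 ≤ n ∧ x = f m n / (m * n)}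
  have hpos : ∀ᶠ p : ℕ × ℕ in atTop ×ˢ atTop, 1 ≤ p.1 ∧ 1 ≤ p.2 :=
    (tendsto_fst.eventually (eventually_ge_atTop 1)).and
      (tendsto_snd.eventually (eventually_ge_atTop 1))
  refine tendsto_order.2 ⟨fun a ha => ?_, fun a ha => ?_⟩
  · have hne : S.Nonempty := ⟨_, 1, 1, le_rfl, le_rfl, rfl⟩
    obtain ⟨_, ⟨m₀, n₀, hm₀, hn₀, rfl⟩, hlt⟩ := exists_lt_of_lt_csSup hne ha
    have hlim : Tendsto
        (fun p : ℕ × ℕ => (1 - m₀ / p.1) * (1 - n₀ / p.2) * (f m₀ n₀ / (m₀ * n₀)))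
        (atTop ×ˢ atTop) (𝓝 (f m₀ n₀ / (m₀ * n₀))) := by
      have h₁ := (tendsto_const_div_atTop_nhds_zero_nat (m₀ : ℝ)).comp
        (tendsto_fst (g := (atTop : Filter ℕ)))
      have h₂ := (tendsto_const_div_atTop_nhds_zero_nat (n₀ : ℝ)).comp
        (tendsto_snd (f := (atTop : Filter ℕ)))
      simpa using (((tendsto_const_nhds (x := (1 : ℝ)).sub h₁).mul
        (tendsto_const_nhds (x := (1 : ℝ)).sub h₂)).mul_const (f m₀ n₀ / (m₀ * n₀)))
    filter_upwards [hlim.eventually (lt_mem_nhds hlt), hpos,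
      tendsto_snd.eventually (eventually_ge_atTop n₀)] with ⟨m, n⟩ hlt' ⟨hm, _⟩ hn₀n
    exact hlt'.trans_le
      (one_sub_div_mul_one_sub_div_mul_le_of_superadditive hf₀ hf_left hf_right hm₀ hn₀ hm hn₀n)
  · filter_upwards [hpos] with ⟨m, n⟩ ⟨hm, hn⟩
    exact (le_csSup hbdd ⟨m, n, hm, hn, rfl⟩).trans_lt ha

end Superadditive

def SimpleGraph.pathGraphSumHom (m n : ℕ) : pathGraph m ⊕g pathGraph n →g pathGraph (m + n) where
  toFun := finSumFinEquiv
  map_rel' := by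
    rintro (a | a) (b | b) h <;> simp_all [pathGraph_adj]
    all_goals omega

def SimpleGraph.Hom.boxProdMapLeft {V W X : Type*} {G : SimpleGraph V} {G' : SimpleGraph W}
    (φ : G →g G') (H : SimpleGraph X) : G.boxProd H →g G'.boxProd H where
  toFun := Prod.map φ id
  map_rel' := by
    rintro ⟨a, x⟩ ⟨b, y⟩ (⟨h, rfl⟩ | ⟨h, rfl⟩)
    · exact .inl ⟨φ.map_adj h, rfl⟩
    · exact .inr ⟨h, rfl⟩

lemma numDomGrid_comm (m n : ℕ) : numDomGrid m n = numDomGrid n m :=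
  Iso.numDominating_eq (boxProdComm _ _)

lemma numDomGrid_mul_le_add_left (m₁ m₂ n : ℕ) :
    numDomGrid m₁ n * numDomGrid m₂ n ≤ numDomGrid (m₁ + m₂) n := by
  let P := pathGraph
  calc numDomGrid m₁ n * numDomGrid m₂ n = numDominating (gridGraph m₁ n ⊕g gridGraph m₂ n) :=
        (numDominating_sum _ _).symm
    _ = numDominating ((P m₁ ⊕g P m₂).boxProd (P n)) :=
        (Iso.numDominating_eq (Iso.sumBoxProdDistrib _ _ _)).symm
    _ ≤ numDomGrid (m₁ + m₂) n :=
        numDominating_le_of_bijective (Hom.boxProdMapLeft (pathGraphSumHom m₁ m₂) (P n))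
          (finSumFinEquiv.bijective.prodMap Function.bijective_id)

lemma numDomGrid_mul_le_add_right (m n₁ n₂ : ℕ) :
    numDomGrid m n₁ * numDomGrid m n₂ ≤ numDomGrid m (n₁ + n₂) := by
  simpa only [numDomGrid_comm m] using numDomGrid_mul_le_add_left n₁ n₂ m

lemma numDomGrid_pos (m n : ℕ) : 0 < numDomGrid m n :=
  one_le_numDominating _

lemma numDomGrid_le_two_pow (m n : ℕ) : numDomGrid m n ≤ 2 ^ (m * n) :=
  (numDominating_le_two_pow (gridGraph m n)).trans_eq (by simp)

lemma log_numDomGrid_nonneg (m n : ℕ) : 0 ≤ Real.log (numDomGrid m n) :=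
  Real.log_nonneg (Nat.one_le_cast.2 (numDomGrid_pos m n))

lemma log_numDomGrid_div_le (m n : ℕ) : Real.log (numDomGrid m n) / (m * n) ≤ Real.log 2 := by
  rcases Nat.eq_zero_or_pos (m * n) with hmn | hmn
  · have : (m : ℝ) * n = 0 := by exact_mod_cast hmn
    simp [this, Real.log_nonneg]
  · rw [div_le_iff₀ (by exact_mod_cast hmn), ← Nat.cast_mul, mul_comm, ← Real.log_pow]
    exact Real.log_le_log (Nat.cast_pos.2 (numDomGrid_pos m n))
      (by exact_mod_cast numDomGrid_le_two_pow m n)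

lemma log_numDomGrid_add_left (m₁ m₂ n : ℕ) :
    Real.log (numDomGrid m₁ n) + Real.log (numDomGrid m₂ n) ≤
      Real.log (numDomGrid (m₁ + m₂) n) := by
  rw [← Real.log_mul (Nat.cast_pos.2 (numDomGrid_pos m₁ n)).ne'
    (Nat.cast_pos.2 (numDomGrid_pos m₂ n)).ne']
  exact Real.log_le_log (by simp [numDomGrid_pos])
    (by exact_mod_cast numDomGrid_mul_le_add_left m₁ m₂ n)

lemma log_numDomGrid_add_right (m n₁ n₂ : ℕ) :
    Real.log (numDomGrid m n₁) + Real.log (numDomGrid m n₂) ≤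
      Real.log (numDomGrid m (n₁ + n₂)) := by
  simpa only [numDomGrid_comm m] using log_numDomGrid_add_left n₁ n₂ m

lemma gridGrowth_eq_exp (m n : ℕ) :
    gridGrowth m n = Real.exp (Real.log (numDomGrid m n) / (m * n)) := by
  rw [gridGrowth, Real.rpow_def_of_pos (Nat.cast_pos.2 (numDomGrid_pos m n)), Nat.cast_mul,
    mul_one_div]

lemma gridGrowth_le_two (m n : ℕ) : gridGrowth m n ≤ 2 := by
  rw [gridGrowth_eq_exp, ← Real.exp_log two_pos]
  exact Real.exp_le_exp.2 (log_numDomGrid_div_le m n)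

/-- `1 ≤ G_{m×n}(1) ≤ 2^{mn}`, hence `G_{m×n}(1)^{1/(mn)} ≤ 2` and the supremum
`sup_{m,n ≥ 1} G_{m×n}(1)^{1/(mn)}` is finite; moreover
`G_{m×n}(1)^{1/(mn)}` tends to this supremum as `min(m,n) → ∞`. -/
theorem gridGrowth_tendsto_sSup :
    (∀ m n : ℕ, 1 ≤ m → 1 ≤ n →
      1 ≤ numDomGrid m n ∧ numDomGrid m n ≤ 2 ^ (m * n) ∧ gridGrowth m n ≤ 2) ∧
    BddAbove {x : ℝ | ∃ m n : ℕ, 1 ≤ m ∧ 1 ≤ n ∧ x = gridGrowth m n} ∧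
    Filter.Tendsto (fun p : ℕ × ℕ => gridGrowth p.1 p.2)
      (Filter.atTop ×ˢ Filter.atTop)
      (nhds (sSup {x : ℝ | ∃ m n : ℕ, 1 ≤ m ∧ 1 ≤ n ∧ x = gridGrowth m n})) := by
  set S := {x : ℝ | ∃ m n : ℕ, 1 ≤ m ∧ 1 ≤ n ∧ x = Real.log (numDomGrid m n) / (m * n)}
  have hS_bdd : BddAbove S :=
    ⟨Real.log 2, by rintro _ ⟨m, n, -, -, rfl⟩; exact log_numDomGrid_div_le m n⟩
  have hS_ne : S.Nonempty := ⟨_, 1, 1, le_rfl, le_rfl, rfl⟩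
  have hgrowth : {x : ℝ | ∃ m n : ℕ, 1 ≤ m ∧ 1 ≤ n ∧ x = gridGrowth m n} = Real.exp '' S := by
    ext
    simp [S, gridGrowth_eq_exp, eq_comm, and_assoc]
  refine ⟨fun m n _ _ => ⟨numDomGrid_pos m n, numDomGrid_le_two_pow m n, gridGrowth_le_two m n⟩,
    ⟨2, by rintro _ ⟨m, n, -, -, rfl⟩; exact gridGrowth_le_two m n⟩, ?_⟩
  rw [hgrowth, ← Monotone.map_csSup_of_continuousAt Real.continuous_exp.continuousAt
    Real.exp_monotone hS_ne hS_bdd]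
  simp only [gridGrowth_eq_exp]
  exact (Real.continuous_exp.tendsto _).comp
    (tendsto_div_mul_sSup_of_superadditive log_numDomGrid_nonneg log_numDomGrid_add_left
      log_numDomGrid_add_right hS_bdd)
end
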